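/- For any positive reals λ₁,…,λ_d, any q ∈ {1,…,N} and any interior multi-index 𝐣 ∈ {0,…,J−2}^d (so that every center coordinate lies in (0,1)), one has a_q^𝐣 = h · (λ₁ j₁ + ⋯ + λ_d j_d) + ( (h + δ^μ)/2 − φ((1−q)δ) ) · (λ₁ + ⋯ + λ_d). -/

import Mathlib

/-! Translating an interior center `c_q^j` by `(1 - q)δ` lands on `jh + (h + δ)/2`, the midpoint of
the quintic piece of `φ` on `[jh + δ, (j + 1)h]`. Since `P(1/2) = 1/2`, `φ` takes the value
`jh + (h + δ^μ)/2` there, so each `ψ_q(c_q^{j_p})` is affine in `j_p`, and summing gives the formula. -/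

noncomputable section

/-- The smeared-out Heaviside shape function `S(z) = z - sin(2πz)/(2π)`. -/
def Sfun (z : ℝ) : ℝ := z - Real.sin (2 * Real.pi * z) / (2 * Real.pi)

/-- The quintic shape function `P(z) = z³(6z² - 15z + 10)`. -/
def Pfun (z : ℝ) : ℝ := z ^ 3 * (6 * z ^ 2 - 15 * z + 10)

/-- The inner function `ψ_q(x) = φ(x + (1-q)δ) - φ((1-q)δ)`. -/
def psi (φ : ℝ → ℝ) (δ : ℝ) (q : ℕ) (x : ℝ) : ℝ :=
  φ (x + (1 - (q : ℝ)) * δ) - φ ((1 - (q : ℝ)) * δ)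

/-- The hypercube center coordinate `c_q^j`, with the boundary conventions
`c_q^{-1} = 0` and `c_q^{J-1} = 1`. -/
def center (h δ : ℝ) (J : ℕ) (q : ℕ) (j : ℤ) : ℝ :=
  if j = -1 then 0
  else if j = (J : ℤ) - 1 then 1
  else (j : ℝ) * h + (h + δ) / 2 + ((q : ℝ) - 1) * δ

/-- The mapped hypercube center `a_q^jv = Ψ_q(𝐜_q^jv) = Σ_p λ_p ψ_q(c_q^{j_p})`. -/
def amap (φ : ℝ → ℝ) (h δ : ℝ) (J : ℕ) {d : ℕ} (lam : Fin d → ℝ)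
    (q : ℕ) (jv : Fin d → ℤ) : ℝ :=
  ∑ p, lam p * psi φ δ q (center h δ J q (jv p))

open Finset

theorem Pfun_one_half : Pfun (1 / 2) = 1 / 2 := by
  norm_num [Pfun]

theorem center_of_interior {h δ : ℝ} {J : ℕ} (q : ℕ) {j : ℤ} (hj0 : 0 ≤ j)
    (hjJ : j ≤ (J : ℤ) - 2) :
    center h δ J q j = (j : ℝ) * h + (h + δ) / 2 + ((q : ℝ) - 1) * δ := by
  rw [center, if_neg (by omega), if_neg (by omega)]

theorem apply_midpoint_of_eq_quintic {φ : ℝ → ℝ} {h δ c : ℝ} (j : ℤ) (hδh : δ < h)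
    (hφP : ∀ t ∈ Set.Icc ((j : ℝ) * h + δ) (((j : ℝ) + 1) * h),
      φ t = (j : ℝ) * h + c + (h - c) * Pfun ((t - (j : ℝ) * h - δ) / (h - δ))) :
    φ ((j : ℝ) * h + (h + δ) / 2) = (j : ℝ) * h + (h + c) / 2 := by
  have hmem : (j : ℝ) * h + (h + δ) / 2 ∈ Set.Icc ((j : ℝ) * h + δ) (((j : ℝ) + 1) * h) :=
    ⟨by linarith, by linarith⟩
  have hmid : ((j : ℝ) * h + (h + δ) / 2 - (j : ℝ) * h - δ) / (h - δ) = 1 / 2 := by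
    field_simp [sub_ne_zero.mpr hδh.ne']
    ring
  rw [hφP _ hmem, hmid, Pfun_one_half]
  ring

theorem psi_center_of_interior {φ : ℝ → ℝ} {h δ c : ℝ} {J : ℕ} (q : ℕ) {j : ℤ}
    (hj0 : 0 ≤ j) (hjJ : j ≤ (J : ℤ) - 2) (hδh : δ < h)
    (hφP : ∀ t ∈ Set.Icc ((j : ℝ) * h + δ) (((j : ℝ) + 1) * h),
      φ t = (j : ℝ) * h + c + (h - c) * Pfun ((t - (j : ℝ) * h - δ) / (h - δ))) :
    psi φ δ q (center h δ J q j) = (j : ℝ) * h + (h + c) / 2 - φ ((1 - (q : ℝ)) * δ) := by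
  have hshift : center h δ J q j + (1 - (q : ℝ)) * δ = (j : ℝ) * h + (h + δ) / 2 := by
    rw [center_of_interior q hj0 hjJ]
    ring
  rw [psi, hshift, apply_midpoint_of_eq_quintic j hδh hφP]

theorem amap_interior_formula_general
    (N : ℕ) (hN : 2 ≤ N) (δ : ℝ) (hδ : 0 < δ) (μ : ℝ)
    (h : ℝ) (hh : h = (N : ℝ) * δ)
    (φ : ℝ → ℝ)
    (hφP : ∀ j : ℤ, ∀ t ∈ Set.Icc ((j : ℝ) * h + δ) (((j : ℝ) + 1) * h),
      φ t = (j : ℝ) * h + δ ^ μ + (h - δ ^ μ) * Pfun ((t - (j : ℝ) * h - δ) / (h - δ)))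
    (J : ℕ)
    (d : ℕ) (lam : Fin d → ℝ)
    :
    ∀ q : ℕ, 1 ≤ q → q ≤ N →
      ∀ jv : Fin d → ℤ, (∀ p, 0 ≤ jv p ∧ jv p ≤ (J : ℤ) - 2) →
        amap φ h δ J lam q jv =
          h * (∑ p, lam p * (jv p : ℝ)) +
          ((h + δ ^ μ) / 2 - φ ((1 - (q : ℝ)) * δ)) * ∑ p, lam p := by
  intro q _ _ jv hjv
  have hδh : δ < h := by
    have hN' : (2 : ℝ) ≤ N := by exact_mod_cast hN
    rw [hh]
    nlinarith
  rw [amap, mul_sum, mul_sum, ← sum_add_distrib]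
  refine sum_congr rfl fun p _ => ?_
  rw [psi_center_of_interior q (hjv p).1 (hjv p).2 hδh (hφP (jv p))]
  ring

/-- explicit formula for a_q^jv for interior multi-indices. -/
theorem amap_interior_formula
    (N : ℕ) (hN : 2 ≤ N) (δ : ℝ) (hδ : 0 < δ) (μ : ℝ) (hμ : 0 < μ)
    (h : ℝ) (hh : h = (N : ℝ) * δ)
    (φ : ℝ → ℝ)
    (hφS : ∀ j : ℤ, ∀ t ∈ Set.Icc ((j : ℝ) * h) ((j : ℝ) * h + δ),
      φ t = (j : ℝ) * h + δ ^ μ * Sfun ((t - (j : ℝ) * h) / δ))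
    (hφP : ∀ j : ℤ, ∀ t ∈ Set.Icc ((j : ℝ) * h + δ) (((j : ℝ) + 1) * h),
      φ t = (j : ℝ) * h + δ ^ μ + (h - δ ^ μ) * Pfun ((t - (j : ℝ) * h - δ) / (h - δ)))
    (J : ℕ) (hJ : 0 < J) (hJh : (J : ℝ) * h = 1)
    (d : ℕ) (hd : 2 ≤ d) (lam : Fin d → ℝ) (hlam : ∀ p, 0 < lam p)
    :
    ∀ q : ℕ, 1 ≤ q → q ≤ N →
      ∀ jv : Fin d → ℤ, (∀ p, 0 ≤ jv p ∧ jv p ≤ (J : ℤ) - 2) →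
        amap φ h δ J lam q jv =
          h * (∑ p, lam p * (jv p : ℝ)) +
          ((h + δ ^ μ) / 2 - φ ((1 - (q : ℝ)) * δ)) * ∑ p, lam p :=
  amap_interior_formula_general N hN δ hδ μ h hh φ hφP J d lam

end
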